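/- arXiv:2307.07968 — 4 statements merged into one kernel-verified Lean document; each statement's English description precedes it below -/
import Mathlib

section
/- For any integer n ≥ 0 and complex y, w, u, q with all denominators nonzero, Σ_{k=0}^{n} [(1 - ywu q^{2k})/(1 - ywu)] · (y,w,u,ywu;q)_k / (q, wuq, yuq, ywq;q)_k · q^k = (yq, wq, uq, ywuq;q)_n / (q, wuq, yuq, ywq;q)_n. -/
set_option maxHeartbeats 1000000

open Finset

/-- The q-shifted factorial `(a;q)_k`. -/
noncomputable def qPoch (a q : ℂ) (k : ℕ) : ℂ := ∏ j ∈ Finset.range k, (1 - a * q ^ j)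

lemma qPoch_zero (a q : ℂ) : qPoch a q 0 = 1 := by simp [qPoch]

lemma qPoch_succ (a q : ℂ) (k : ℕ) :
    qPoch a q (k + 1) = qPoch a q k * (1 - a * q ^ k) := by
  simp [qPoch, Finset.prod_range_succ]

lemma qPoch_succ' (a q : ℂ) (k : ℕ) :
    qPoch a q (k + 1) = (1 - a) * qPoch (a * q) q k := by
  rw [qPoch, qPoch, Finset.prod_range_succ']
  simp [mul_comm, mul_assoc, pow_succ, mul_left_comm]

lemma frac_aux2 (a v n1 n2 n3 m1 m2 m3 m4 d r : ℂ) (hv : v ≠ 0) :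
    a / v * (n1 * m1 * (n2 * m2) * (n3 * m3) * (v * m4) / d) * r
      = a * (n1 * n2 * n3) * r * (m1 * m2 * m3 * m4 / d) := by
  rcases eq_or_ne d 0 with h | h
  · simp [h]
  · field_simp

lemma frac_aux (N D S T c : ℂ) (hD : D ≠ 0) (hS : S ≠ 0) (hk : S + c = T) :
    N / D + c * (N / (D * S)) = N * T / (D * S) := by
  rw [← hk]
  field_simp

/-- Gasper–Rahman Ex. 2.5: a very-well-poised finite summation. -/
theorem vwp_finite_summation (y w u q : ℂ) (n : ℕ)
    (h1 : 1 - y * w * u ≠ 0)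
    (hden : ∀ k ≤ n,
      qPoch q q k * qPoch (w * u * q) q k * qPoch (y * u * q) q k * qPoch (y * w * q) q k ≠ 0) :
    ∑ k ∈ Finset.range (n + 1),
        (1 - y * w * u * q ^ (2 * k)) / (1 - y * w * u) *
          ((qPoch y q k * qPoch w q k * qPoch u q k * qPoch (y * w * u) q k) /
            (qPoch q q k * qPoch (w * u * q) q k * qPoch (y * u * q) q k * qPoch (y * w * q) q k)) *
          q ^ k =
      (qPoch (y * q) q n * qPoch (w * q) q n * qPoch (u * q) q n * qPoch (y * w * u * q) q n) /
        (qPoch q q n * qPoch (w * u * q) q n * qPoch (y * u * q) q n * qPoch (y * w * q) q n) := by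
  induction n with
  | zero =>
    simp [qPoch_zero, div_self h1]
  | succ n ih =>
    have hd0 := hden n (Nat.le_succ n)
    have hd1 := hden (n + 1) (le_refl _)
    have hA : qPoch q q n ≠ 0 := fun h => hd0 (by simp [h])
    have hB : qPoch (w * u * q) q n ≠ 0 := fun h => hd0 (by simp [h])
    have hC : qPoch (y * u * q) q n ≠ 0 := fun h => hd0 (by simp [h])
    have hD : qPoch (y * w * q) q n ≠ 0 := fun h => hd0 (by simp [h])
    have hA1 : qPoch q q (n+1) ≠ 0 := fun h => hd1 (by simp [h])
    have hB1 : qPoch (w * u * q) q (n+1) ≠ 0 := fun h => hd1 (by simp [h])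
    have hC1 : qPoch (y * u * q) q (n+1) ≠ 0 := fun h => hd1 (by simp [h])
    have hD1 : qPoch (y * w * q) q (n+1) ≠ 0 := fun h => hd1 (by simp [h])
    have hsA : (1 - q * q ^ n) ≠ 0 := by
      intro h; apply hA1; rw [qPoch_succ, h, mul_zero]
    have hsB : (1 - w * u * q * q ^ n) ≠ 0 := by
      intro h; apply hB1; rw [qPoch_succ, h, mul_zero]
    have hsC : (1 - y * u * q * q ^ n) ≠ 0 := by
      intro h; apply hC1; rw [qPoch_succ, h, mul_zero]
    have hsD : (1 - y * w * q * q ^ n) ≠ 0 := by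
      intro h; apply hD1; rw [qPoch_succ, h, mul_zero]
    rw [Finset.sum_range_succ, ih (fun k hk => hden k (Nat.le_succ_of_le hk))]
    set N : ℂ := qPoch (y * q) q n * qPoch (w * q) q n * qPoch (u * q) q n *
        qPoch (y * w * u * q) q n with hN
    set D : ℂ := qPoch q q n * qPoch (w * u * q) q n * qPoch (y * u * q) q n *
        qPoch (y * w * q) q n with hDdef
    set S : ℂ := (1 - q * q ^ n) * (1 - w * u * q * q ^ n) * (1 - y * u * q * q ^ n) *
        (1 - y * w * q * q ^ n) with hS
    set T : ℂ := (1 - y * q * q ^ n) * (1 - w * q * q ^ n) * (1 - u * q * q ^ n) *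
        (1 - y * w * u * q * q ^ n) with hT
    set c : ℂ := (1 - y * w * u * (q ^ n * q ^ n * q * q)) * ((1 - y) * (1 - w) * (1 - u)) *
        (q ^ n * q) with hc
    have hDne : D ≠ 0 := hd0
    have hSne : S ≠ 0 := by
      exact mul_ne_zero (mul_ne_zero (mul_ne_zero hsA hsB) hsC) hsD
    have hq2 : q ^ (2 * (n + 1)) = q ^ n * q ^ n * q * q := by
      rw [pow_mul]; ring
    have hterm : (1 - y * w * u * q ^ (2 * (n+1))) / (1 - y * w * u) *
          ((qPoch y q (n+1) * qPoch w q (n+1) * qPoch u q (n+1) * qPoch (y * w * u) q (n+1)) /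
            (qPoch q q (n+1) * qPoch (w * u * q) q (n+1) * qPoch (y * u * q) q (n+1) *
              qPoch (y * w * q) q (n+1))) * q ^ (n+1) = c * (N / (D * S)) := by
      have hDS : qPoch q q n * (1 - q * q ^ n) * (qPoch (w * u * q) q n * (1 - w * u * q * q ^ n)) *
          (qPoch (y * u * q) q n * (1 - y * u * q * q ^ n)) *
          (qPoch (y * w * q) q n * (1 - y * w * q * q ^ n)) = D * S := by
        rw [hDdef, hS]; ring
      rw [qPoch_succ' y, qPoch_succ' w, qPoch_succ' u, qPoch_succ' (y*w*u),
          qPoch_succ q, qPoch_succ (w*u*q), qPoch_succ (y*u*q), qPoch_succ (y*w*q),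
          hq2, pow_succ, hDS, hN, hc]
      exact frac_aux2 _ _ _ _ _ _ _ _ _ _ _ h1
    rw [hterm]
    have hkey : S + c = T := by rw [hS, hc, hT]; ring
    rw [frac_aux N D S T c hDne hSne hkey]
    rw [qPoch_succ (y*q), qPoch_succ (w*q), qPoch_succ (u*q), qPoch_succ (y*w*u*q),
        qPoch_succ q, qPoch_succ (w*u*q), qPoch_succ (y*u*q), qPoch_succ (y*w*q),
        hN, hDdef, hS, hT]
    congr 1 <;> ring
end

section
/- For any integer n ≥ 1, Σ_{k=0}^{n-1} (-16)^{n-k} · (1/(k+1)) · C(2k,k)^2 = 4n · C(2n,n)^2 - 8 Σ_{k=1}^{n} (-16)^{n-k} · k · C(2k,k)^2, where C(2k,k) is the central binomial coefficient. -/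
open Finset

lemma cbq_succ (n : ℕ) :
    ((n : ℚ) + 1) * (Nat.choose (2 * (n + 1)) (n + 1) : ℚ) =
      2 * (2 * n + 1) * (Nat.choose (2 * n) n : ℚ) := by
  have h := Nat.succ_mul_centralBinom_succ n
  simp only [Nat.centralBinom] at h
  have h' : ((n + 1) * Nat.choose (2 * (n + 1)) (n + 1) : ℚ) =
      ((2 * (2 * n + 1) * Nat.choose (2 * n) n : ℕ) : ℚ) := by exact_mod_cast h
  push_cast at h'
  linarith

/-- A combinatorial identity with squares of central binomial coefficients. -/
theorem central_binom_identity (n : ℕ) (hn : 1 ≤ n) :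
    ∑ k ∈ Finset.range n, (-16 : ℚ) ^ (n - k) * (1 / (k + 1)) * ((Nat.choose (2 * k) k : ℚ)) ^ 2 =
      4 * n * ((Nat.choose (2 * n) n : ℚ)) ^ 2 -
        8 * ∑ k ∈ Finset.Icc 1 n, (-16 : ℚ) ^ (n - k) * ((Nat.choose (2 * k) k : ℚ)) ^ 2 * k := by
  induction n, hn using Nat.le_induction with
  | base => norm_num
  | succ n hn ih =>
    rw [Finset.sum_range_succ, Finset.sum_Icc_succ_top (by omega : 1 ≤ n + 1)]
    have h1 : ∀ k ∈ Finset.range n,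
        (-16 : ℚ) ^ (n + 1 - k) * (1 / (k + 1)) * ((Nat.choose (2 * k) k : ℚ)) ^ 2 =
        -16 * ((-16 : ℚ) ^ (n - k) * (1 / (k + 1)) * ((Nat.choose (2 * k) k : ℚ)) ^ 2) := by
      intro k hk
      rw [Finset.mem_range] at hk
      have : n + 1 - k = (n - k) + 1 := by omega
      rw [this, pow_succ]
      ring
    have h2 : ∀ k ∈ Finset.Icc 1 n,
        (-16 : ℚ) ^ (n + 1 - k) * ((Nat.choose (2 * k) k : ℚ)) ^ 2 * k =
        -16 * ((-16 : ℚ) ^ (n - k) * ((Nat.choose (2 * k) k : ℚ)) ^ 2 * k) := by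
      intro k hk
      rw [Finset.mem_Icc] at hk
      have : n + 1 - k = (n - k) + 1 := by omega
      rw [this, pow_succ]
      ring
    rw [Finset.sum_congr rfl h1, Finset.sum_congr rfl h2, ← Finset.mul_sum,
      ← Finset.mul_sum, ih]
    have hc := cbq_succ n
    have hne : ((n : ℚ) + 1) ≠ 0 := by positivity
    have hcsq : ((Nat.choose (2 * (n + 1)) (n + 1) : ℚ)) ^ 2 =
        (2 * (2 * n + 1)) ^ 2 * ((Nat.choose (2 * n) n : ℚ)) ^ 2 / ((n : ℚ) + 1) ^ 2 := by
      field_simp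
      linear_combination (((n : ℚ) + 1) * (Nat.choose (2 * (n + 1)) (n + 1) : ℚ) +
        2 * (2 * (n : ℚ) + 1) * (Nat.choose (2 * n) n : ℚ)) * hc
    have e1 : n + 1 - n = 1 := by omega
    have e2 : n + 1 - (n + 1) = 0 := by omega
    rw [e1, e2]
    push_cast
    rw [hcsq]
    field_simp
    ring
end

section
/- For nonzero complex a, b, c, d, e with all denominators nonzero and any integer n ≥ 0: Σ_{k=0}^{n} [(1 - bcde p^{2k}/a)/(1 - bcde/a)] · (b, d, e, bc^2de/a^2; p)_k / (ap/c, cdep/a, bcep/a, bcdp/a; p)_k · p^k = [(1-c/a)(1-cde/a)(1-bce/a)(1-bcd/a)] / [(1-bc/a)(1-cd/a)(1-ce/a)(1-bcde/a)] · (1 - (b,d,e,bc^2de/a^2;p)_{n+1} / (a/c, cde/a, bce/a, bcd/a;p)_{n+1}). -/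
/-! The closed form is a telescoping sum. Put `f = b c² d e / a²` and
`F k = (b, d, e, f; p)_k / (a/c, cde/a, bce/a, bcd/a; p)_k`, so that `F 0 = 1` and
`F (k+1) = F k · N(p^k) / M(p^k)` for the quartics `N(Q) = ∏ (1 - x Q)` over `x ∈ {b, d, e, f}` and
`M(Q) = ∏ (1 - x Q)` over `x ∈ {a/c, cde/a, bce/a, bcd/a}`. Shifting the denominator parameters by `p`
turns the `k`-th summand into a multiple of `F k · Q / M(Q)` with `Q = p^k`, and the polynomial identity
`M(Q) - N(Q) = -(a/c)(1 - bc/a)(1 - cd/a)(1 - ce/a) · Q · (1 - bcde Q²/a)`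
shows that this summand is `C · (F k - F (k+1))`, `C` being the constant in front of the right-hand side. -/

open Finset

noncomputable def qPoch4 (x₁ x₂ x₃ x₄ q : ℂ) (k : ℕ) : ℂ :=
  qPoch x₁ q k * qPoch x₂ q k * qPoch x₃ q k * qPoch x₄ q k

noncomputable def qPoch4Factor (x₁ x₂ x₃ x₄ Q : ℂ) : ℂ :=
  (1 - x₁ * Q) * (1 - x₂ * Q) * (1 - x₃ * Q) * (1 - x₄ * Q)

lemma qPoch_succ_eq_one_sub_mul (x q : ℂ) (k : ℕ) :
    qPoch x q (k + 1) = (1 - x) * qPoch (x * q) q k := by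
  simp only [qPoch, prod_range_succ', pow_zero, mul_one, pow_succ, mul_assoc, mul_comm]

lemma qPoch4_eq_prod (x₁ x₂ x₃ x₄ q : ℂ) (k : ℕ) :
    qPoch4 x₁ x₂ x₃ x₄ q k = ∏ j ∈ range k, qPoch4Factor x₁ x₂ x₃ x₄ (q ^ j) := by
  simp only [qPoch4, qPoch4Factor, qPoch, prod_mul_distrib]

lemma qPoch4_zero (x₁ x₂ x₃ x₄ q : ℂ) : qPoch4 x₁ x₂ x₃ x₄ q 0 = 1 := by
  simp [qPoch4_eq_prod]

lemma qPoch4_succ (x₁ x₂ x₃ x₄ q : ℂ) (k : ℕ) :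
    qPoch4 x₁ x₂ x₃ x₄ q (k + 1) = qPoch4 x₁ x₂ x₃ x₄ q k * qPoch4Factor x₁ x₂ x₃ x₄ (q ^ k) := by
  simp only [qPoch4_eq_prod, prod_range_succ]

lemma qPoch4Factor_ne_zero {x₁ x₂ x₃ x₄ q : ℂ} {m : ℕ} (h : qPoch4 x₁ x₂ x₃ x₄ q m ≠ 0)
    {j : ℕ} (hj : j < m) : qPoch4Factor x₁ x₂ x₃ x₄ (q ^ j) ≠ 0 := by
  rw [qPoch4_eq_prod, prod_ne_zero_iff] at h
  exact h j (mem_range.mpr hj)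

lemma qPoch4Factor_one_mul_qPoch4_mul (x₁ x₂ x₃ x₄ q : ℂ) (k : ℕ) :
    qPoch4Factor x₁ x₂ x₃ x₄ 1 * qPoch4 (x₁ * q) (x₂ * q) (x₃ * q) (x₄ * q) q k =
      qPoch4 x₁ x₂ x₃ x₄ q k * qPoch4Factor x₁ x₂ x₃ x₄ (q ^ k) := by
  rw [← qPoch4_succ]
  simp only [qPoch4, qPoch4Factor, qPoch_succ_eq_one_sub_mul]
  ring

lemma gasper_qPoch4Factor_sub {a c : ℂ} (ha : a ≠ 0) (hc : c ≠ 0) (b d e Q : ℂ) :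
    qPoch4Factor (a / c) (c * d * e / a) (b * c * e / a) (b * c * d / a) Q -
        qPoch4Factor b d e (b * c ^ 2 * d * e / a ^ 2) Q =
      -(a / c) * ((1 - b * c / a) * (1 - c * d / a) * (1 - c * e / a)) * Q *
        (1 - b * c * d * e * Q ^ 2 / a) := by
  simp only [qPoch4Factor]
  field_simp
  ring

noncomputable def gasperConstant (a b c d e : ℂ) : ℂ :=
  ((1 - c / a) * (1 - c * d * e / a) * (1 - b * c * e / a) * (1 - b * c * d / a)) /
    ((1 - b * c / a) * (1 - c * d / a) * (1 - c * e / a) * (1 - b * c * d * e / a))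

noncomputable def gasperRatio (a b c d e p : ℂ) (k : ℕ) : ℂ :=
  qPoch4 b d e (b * c ^ 2 * d * e / a ^ 2) p k /
    qPoch4 (a / c) (c * d * e / a) (b * c * e / a) (b * c * d / a) p k

lemma gasperRatio_zero (a b c d e p : ℂ) : gasperRatio a b c d e p 0 = 1 := by
  simp only [gasperRatio, qPoch4_zero, div_one]

lemma gasperRatio_succ (a b c d e p : ℂ) (k : ℕ) :
    gasperRatio a b c d e p (k + 1) = gasperRatio a b c d e p k *
      qPoch4Factor b d e (b * c ^ 2 * d * e / a ^ 2) (p ^ k) /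
        qPoch4Factor (a / c) (c * d * e / a) (b * c * e / a) (b * c * d / a) (p ^ k) := by
  simp only [gasperRatio, qPoch4_succ, div_mul_div_comm, mul_div_assoc]

lemma gasperConstant_mul_qPoch4Factor_sub {a b c d e : ℂ} (ha : a ≠ 0) (hc : c ≠ 0)
    (hfac : (1 - b * c / a) * (1 - c * d / a) * (1 - c * e / a) * (1 - b * c * d * e / a) ≠ 0)
    (Q : ℂ) :
    gasperConstant a b c d e *
        (qPoch4Factor (a / c) (c * d * e / a) (b * c * e / a) (b * c * d / a) Q -
          qPoch4Factor b d e (b * c ^ 2 * d * e / a ^ 2) Q) =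
      qPoch4Factor (a / c) (c * d * e / a) (b * c * e / a) (b * c * d / a) 1 * Q *
        ((1 - b * c * d * e * Q ^ 2 / a) / (1 - b * c * d * e / a)) := by
  have hflip : (1 - c / a) * -(a / c) = 1 - a / c := by field_simp; ring
  rw [gasperConstant, gasper_qPoch4Factor_sub ha hc, div_mul_eq_mul_div, ← mul_div_assoc,
    div_eq_div_iff hfac (right_ne_zero_of_mul hfac)]
  simp only [qPoch4Factor, mul_one]
  linear_combination ((1 - c * d * e / a) * (1 - b * c * e / a) * (1 - b * c * d / a) *
    ((1 - b * c / a) * (1 - c * d / a) * (1 - c * e / a)) * Q * (1 - b * c * d * e * Q ^ 2 / a) *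
    (1 - b * c * d * e / a)) * hflip

lemma gasper_summand_eq {a b c d e p : ℂ} (ha : a ≠ 0) (hc : c ≠ 0)
    (hfac : (1 - b * c / a) * (1 - c * d / a) * (1 - c * e / a) * (1 - b * c * d * e / a) ≠ 0)
    (hE : qPoch4Factor (a / c) (c * d * e / a) (b * c * e / a) (b * c * d / a) 1 ≠ 0) {k : ℕ}
    (hM : qPoch4Factor (a / c) (c * d * e / a) (b * c * e / a) (b * c * d / a) (p ^ k) ≠ 0) :
    (1 - b * c * d * e * p ^ (2 * k) / a) / (1 - b * c * d * e / a) *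
        (qPoch4 b d e (b * c ^ 2 * d * e / a ^ 2) p k /
          qPoch4 (a * p / c) (c * d * e * p / a) (b * c * e * p / a) (b * c * d * p / a) p k) *
        p ^ k =
      gasperConstant a b c d e * (gasperRatio a b c d e p k - gasperRatio a b c d e p (k + 1)) := by
  have hdiff : gasperRatio a b c d e p k - gasperRatio a b c d e p (k + 1) =
      (qPoch4Factor (a / c) (c * d * e / a) (b * c * e / a) (b * c * d / a) (p ^ k) -
          qPoch4Factor b d e (b * c ^ 2 * d * e / a ^ 2) (p ^ k)) *
        gasperRatio a b c d e p k /
          qPoch4Factor (a / c) (c * d * e / a) (b * c * e / a) (b * c * d / a) (p ^ k) := by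
    rw [gasperRatio_succ]
    field_simp
  have hshift := qPoch4Factor_one_mul_qPoch4_mul (a / c) (c * d * e / a) (b * c * e / a)
    (b * c * d / a) p k
  simp only [div_mul_eq_mul_div] at hshift
  rw [hdiff, ← mul_div_assoc (gasperConstant a b c d e), ← mul_assoc (gasperConstant a b c d e),
    gasperConstant_mul_qPoch4Factor_sub ha hc hfac,
    eq_div_of_mul_eq hE ((mul_comm _ _).trans hshift), div_div_eq_mul_div, gasperRatio,
    mul_comm 2 k, pow_mul]
  ring

theorem gasper_bibasic_summation_general
    (a b c d e p : ℂ) (n : ℕ)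
    (ha : a ≠ 0) (hc : c ≠ 0)
    (hfac : (1 - b * c / a) * (1 - c * d / a) * (1 - c * e / a) * (1 - b * c * d * e / a) ≠ 0)
    (hden' : qPoch (a / c) p (n + 1) * qPoch (c * d * e / a) p (n + 1) *
      qPoch (b * c * e / a) p (n + 1) * qPoch (b * c * d / a) p (n + 1) ≠ 0) :
    ∑ k ∈ Finset.range (n + 1),
        (1 - b * c * d * e * p ^ (2 * k) / a) / (1 - b * c * d * e / a) *
          ((qPoch b p k * qPoch d p k * qPoch e p k * qPoch (b * c ^ 2 * d * e / a ^ 2) p k) /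
            (qPoch (a * p / c) p k * qPoch (c * d * e * p / a) p k *
              qPoch (b * c * e * p / a) p k * qPoch (b * c * d * p / a) p k)) * p ^ k =
      ((1 - c / a) * (1 - c * d * e / a) * (1 - b * c * e / a) * (1 - b * c * d / a)) /
          ((1 - b * c / a) * (1 - c * d / a) * (1 - c * e / a) * (1 - b * c * d * e / a)) *
        (1 - (qPoch b p (n + 1) * qPoch d p (n + 1) * qPoch e p (n + 1) *
            qPoch (b * c ^ 2 * d * e / a ^ 2) p (n + 1)) /
          (qPoch (a / c) p (n + 1) * qPoch (c * d * e / a) p (n + 1) *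
            qPoch (b * c * e / a) p (n + 1) * qPoch (b * c * d / a) p (n + 1))) := by
  have hB : qPoch4 (a / c) (c * d * e / a) (b * c * e / a) (b * c * d / a) p (n + 1) ≠ 0 := hden'
  have hE := pow_zero p ▸ qPoch4Factor_ne_zero hB n.succ_pos
  calc _ = ∑ k ∈ range (n + 1),
          gasperConstant a b c d e * (gasperRatio a b c d e p k - gasperRatio a b c d e p (k + 1)) :=
        sum_congr rfl fun k hk => gasper_summand_eq ha hc hfac hE
          (qPoch4Factor_ne_zero hB (mem_range.mp hk))
    _ = gasperConstant a b c d e * (1 - gasperRatio a b c d e p (n + 1)) := by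
        rw [← mul_sum, sum_range_sub', gasperRatio_zero]

/-- Gasper's bibasic summation formula. -/
theorem gasper_bibasic_summation
    (a b c d e p : ℂ) (n : ℕ)
    (ha : a ≠ 0) (hb : b ≠ 0) (hc : c ≠ 0) (hd : d ≠ 0) (he : e ≠ 0) (hp : p ≠ 0)
    (hbcde : 1 - b * c * d * e / a ≠ 0)
    (hfac : (1 - b * c / a) * (1 - c * d / a) * (1 - c * e / a) * (1 - b * c * d * e / a) ≠ 0)
    (hden : ∀ k ≤ n, qPoch (a * p / c) p k * qPoch (c * d * e * p / a) p k *
      qPoch (b * c * e * p / a) p k * qPoch (b * c * d * p / a) p k ≠ 0)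
    (hden' : qPoch (a / c) p (n + 1) * qPoch (c * d * e / a) p (n + 1) *
      qPoch (b * c * e / a) p (n + 1) * qPoch (b * c * d / a) p (n + 1) ≠ 0) :
    ∑ k ∈ Finset.range (n + 1),
        (1 - b * c * d * e * p ^ (2 * k) / a) / (1 - b * c * d * e / a) *
          ((qPoch b p k * qPoch d p k * qPoch e p k * qPoch (b * c ^ 2 * d * e / a ^ 2) p k) /
            (qPoch (a * p / c) p k * qPoch (c * d * e * p / a) p k *
              qPoch (b * c * e * p / a) p k * qPoch (b * c * d * p / a) p k)) * p ^ k =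
      ((1 - c / a) * (1 - c * d * e / a) * (1 - b * c * e / a) * (1 - b * c * d / a)) /
          ((1 - b * c / a) * (1 - c * d / a) * (1 - c * e / a) * (1 - b * c * d * e / a)) *
        (1 - (qPoch b p (n + 1) * qPoch d p (n + 1) * qPoch e p (n + 1) *
            qPoch (b * c ^ 2 * d * e / a ^ 2) p (n + 1)) /
          (qPoch (a / c) p (n + 1) * qPoch (c * d * e / a) p (n + 1) *
            qPoch (b * c * e / a) p (n + 1) * qPoch (b * c * d / a) p (n + 1))) :=
  gasper_bibasic_summation_general a b c d e p n ha hc hfac hden'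
end

section
/- Let x_1,x_2,x_3,x_4 and q_1,q_2,q_3,q_4 be nonzero complex numbers with fixed square roots of the q_i, K_0 = x_1x_2x_3x_4 and L_0 = √(q_1q_2q_3q_4). Define B_k := Π_{i=1}^4 (x_i^2;q_i)_k / (K_0/x_i^2; L_0/q_i)_k. Then for every k ≥ 0, B_k - B_{k+1} = Γ_k · (1 - K_0 L_0^k)/(K_0 L_0^k) · Π_{i=1}^4 (x_i^2;q_i)_k / (K_0/x_i^2; L_0/q_i)_{k+1}, where Γ_k := (x_1x_2(q_1q_2)^{k/2} - x_3x_4(q_3q_4)^{k/2})(x_1x_3(q_1q_3)^{k/2} - x_2x_4(q_2q_4)^{k/2})(x_1x_4(q_1q_4)^{k/2} - x_2x_3(q_2q_3)^{k/2}). -/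
open Finset

lemma key4 (v1 v2 v3 v4 : ℂ) (h1 : v1 ≠ 0) (h2 : v2 ≠ 0) (h3 : v3 ≠ 0) (h4 : v4 ≠ 0) :
    (1 - v2*(v3*v4)/v1) * (1 - v1*(v3*v4)/v2) * (1 - v1*(v2*v4)/v3) * (1 - v1*(v2*v3)/v4)
      - (1 - v1^2)*((1 - v2^2)*((1 - v3^2)*(1 - v4^2)))
      = (v1*v2 - v3*v4)*(v1*v3 - v2*v4)*(v1*v4 - v2*v3)
        * ((1 - v1*(v2*(v3*v4)))/(v1*(v2*(v3*v4)))) := by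
  field_simp
  ring

lemma frac4 (N D1 D2 D3 D4 F1 F2 F3 F4 A G : ℂ)
    (d1 : D1 ≠ 0) (d2 : D2 ≠ 0) (d3 : D3 ≠ 0) (d4 : D4 ≠ 0)
    (g1 : F1 ≠ 0) (g2 : F2 ≠ 0) (g3 : F3 ≠ 0) (g4 : F4 ≠ 0)
    (hkey : F1*F2*F3*F4 - A = G) :
    N/(D1*D2*D3*D4) - N*A/(D1*F1*(D2*F2)*(D3*F3)*(D4*F4))
      = G * (N/(D1*F1*(D2*F2)*(D3*F3)*(D4*F4))) := by
  subst hkey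
  have hD : D1*D2*D3*D4 ≠ 0 := by simp [d1, d2, d3, d4]
  have hDen : D1*F1*(D2*F2)*(D3*F3)*(D4*F4) ≠ 0 := by
    apply_rules [mul_ne_zero]
  have e : N/(D1*D2*D3*D4) = N*(F1*F2*F3*F4)/(D1*F1*(D2*F2)*(D3*F3)*(D4*F4)) := by
    rw [div_eq_div_iff hD hDen]; ring
  rw [e, div_sub_div_same, ← mul_div_assoc, div_eq_div_iff hDen hDen]
  ring

/-- Forward-difference evaluation of
`B_k = ∏ᵢ (xᵢ²;qᵢ)_k / (K₀/xᵢ²; L₀/qᵢ)_k` used in Abel's lemma for the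
eight-base q-series transformations. Here `sᵢ` is a fixed square root of `qᵢ`,
so `L₀ = √(q₁q₂q₃q₄) = s₁s₂s₃s₄` and `(qᵢqⱼ)^{k/2} = (sᵢsⱼ)^k`. -/
theorem forward_difference_B
    (x1 x2 x3 x4 s1 s2 s3 s4 q1 q2 q3 q4 K0 L0 : ℂ)
    (B : ℕ → ℂ) (Γ : ℕ → ℂ)
    (hx1 : x1 ≠ 0) (hx2 : x2 ≠ 0) (hx3 : x3 ≠ 0) (hx4 : x4 ≠ 0)
    (hs1 : s1 ≠ 0) (hs2 : s2 ≠ 0) (hs3 : s3 ≠ 0) (hs4 : s4 ≠ 0)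
    (hq1 : s1 ^ 2 = q1) (hq2 : s2 ^ 2 = q2) (hq3 : s3 ^ 2 = q3) (hq4 : s4 ^ 2 = q4)
    (hK0 : K0 = x1 * x2 * x3 * x4) (hL0 : L0 = s1 * s2 * s3 * s4)
    (hB : ∀ k : ℕ, B k =
      (qPoch (x1 ^ 2) q1 k * qPoch (x2 ^ 2) q2 k * qPoch (x3 ^ 2) q3 k * qPoch (x4 ^ 2) q4 k) /
        (qPoch (K0 / x1 ^ 2) (L0 / q1) k * qPoch (K0 / x2 ^ 2) (L0 / q2) k *
          qPoch (K0 / x3 ^ 2) (L0 / q3) k * qPoch (K0 / x4 ^ 2) (L0 / q4) k))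
    (hΓ : ∀ k : ℕ, Γ k =
      (x1 * x2 * (s1 * s2) ^ k - x3 * x4 * (s3 * s4) ^ k) *
        (x1 * x3 * (s1 * s3) ^ k - x2 * x4 * (s2 * s4) ^ k) *
        (x1 * x4 * (s1 * s4) ^ k - x2 * x3 * (s2 * s3) ^ k))
    (hden : ∀ k : ℕ, qPoch (K0 / x1 ^ 2) (L0 / q1) k * qPoch (K0 / x2 ^ 2) (L0 / q2) k *
      qPoch (K0 / x3 ^ 2) (L0 / q3) k * qPoch (K0 / x4 ^ 2) (L0 / q4) k ≠ 0) :
    ∀ k : ℕ,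
      B k - B (k + 1) =
        Γ k * ((1 - K0 * L0 ^ k) / (K0 * L0 ^ k)) *
          ((qPoch (x1 ^ 2) q1 k * qPoch (x2 ^ 2) q2 k *
              qPoch (x3 ^ 2) q3 k * qPoch (x4 ^ 2) q4 k) /
            (qPoch (K0 / x1 ^ 2) (L0 / q1) (k + 1) * qPoch (K0 / x2 ^ 2) (L0 / q2) (k + 1) *
              qPoch (K0 / x3 ^ 2) (L0 / q3) (k + 1) * qPoch (K0 / x4 ^ 2) (L0 / q4) (k + 1))) := by
  subst hq1 hq2 hq3 hq4 hK0 hL0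
  intro k
  have h := hden k
  have d4 := (mul_ne_zero_iff.mp h).2
  have d3 := (mul_ne_zero_iff.mp (mul_ne_zero_iff.mp h).1).2
  have d2 := (mul_ne_zero_iff.mp (mul_ne_zero_iff.mp (mul_ne_zero_iff.mp h).1).1).2
  have d1 := (mul_ne_zero_iff.mp (mul_ne_zero_iff.mp (mul_ne_zero_iff.mp h).1).1).1
  have h' := hden (k + 1)
  simp only [qPoch_succ] at h'
  have f4 := (mul_ne_zero_iff.mp (mul_ne_zero_iff.mp h').2).2
  have f3 := (mul_ne_zero_iff.mp (mul_ne_zero_iff.mp (mul_ne_zero_iff.mp h').1).2).2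
  have f2 := (mul_ne_zero_iff.mp (mul_ne_zero_iff.mp
    (mul_ne_zero_iff.mp (mul_ne_zero_iff.mp h').1).1).2).2
  have f1 := (mul_ne_zero_iff.mp (mul_ne_zero_iff.mp
    (mul_ne_zero_iff.mp (mul_ne_zero_iff.mp h').1).1).1).2
  rw [hB, hB, hΓ]
  simp only [qPoch_succ]
  -- rewrite everything in terms of vᵢ = xᵢ * sᵢ^k
  have c1 : (x1*x2*x3*x4/x1^2) * ((s1*s2*s3*s4)/(s1^2))^k
      = (x2*s2^k)*((x3*s3^k)*(x4*s4^k))/(x1*s1^k) := by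
    rw [div_pow]; field_simp; ring
  have c2 : (x1*x2*x3*x4/x2^2) * ((s1*s2*s3*s4)/(s2^2))^k
      = (x1*s1^k)*((x3*s3^k)*(x4*s4^k))/(x2*s2^k) := by
    rw [div_pow]; field_simp; ring
  have c3 : (x1*x2*x3*x4/x3^2) * ((s1*s2*s3*s4)/(s3^2))^k
      = (x1*s1^k)*((x2*s2^k)*(x4*s4^k))/(x3*s3^k) := by
    rw [div_pow]; field_simp; ring
  have c4 : (x1*x2*x3*x4/x4^2) * ((s1*s2*s3*s4)/(s4^2))^k
      = (x1*s1^k)*((x2*s2^k)*(x3*s3^k))/(x4*s4^k) := by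
    rw [div_pow]; field_simp; ring
  have a1 : x1^2*(s1^2)^k = (x1*s1^k)^2 := by rw [mul_pow, ← pow_mul, ← pow_mul, Nat.mul_comm]
  have a2 : x2^2*(s2^2)^k = (x2*s2^k)^2 := by rw [mul_pow, ← pow_mul, ← pow_mul, Nat.mul_comm]
  have a3 : x3^2*(s3^2)^k = (x3*s3^k)^2 := by rw [mul_pow, ← pow_mul, ← pow_mul, Nat.mul_comm]
  have a4 : x4^2*(s4^2)^k = (x4*s4^k)^2 := by rw [mul_pow, ← pow_mul, ← pow_mul, Nat.mul_comm]
  have hG1 : x1*x2*(s1*s2)^k - x3*x4*(s3*s4)^k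
      = (x1*s1^k)*(x2*s2^k) - (x3*s3^k)*(x4*s4^k) := by rw [mul_pow, mul_pow]; ring
  have hG2 : x1*x3*(s1*s3)^k - x2*x4*(s2*s4)^k
      = (x1*s1^k)*(x3*s3^k) - (x2*s2^k)*(x4*s4^k) := by rw [mul_pow, mul_pow]; ring
  have hG3 : x1*x4*(s1*s4)^k - x2*x3*(s2*s3)^k
      = (x1*s1^k)*(x4*s4^k) - (x2*s2^k)*(x3*s3^k) := by rw [mul_pow, mul_pow]; ring
  have hP : x1*x2*x3*x4 * (s1*s2*s3*s4)^k
      = (x1*s1^k)*((x2*s2^k)*((x3*s3^k)*(x4*s4^k))) := by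
    rw [mul_pow, mul_pow, mul_pow]; ring
  rw [c1] at f1
  rw [c2] at f2
  rw [c3] at f3
  rw [c4] at f4
  rw [c1, c2, c3, c4, a1, a2, a3, a4, hG1, hG2, hG3, hP]
  have u1 : x1*s1^k ≠ 0 := mul_ne_zero hx1 (pow_ne_zero _ hs1)
  have u2 : x2*s2^k ≠ 0 := mul_ne_zero hx2 (pow_ne_zero _ hs2)
  have u3 : x3*s3^k ≠ 0 := mul_ne_zero hx3 (pow_ne_zero _ hs3)
  have u4 : x4*s4^k ≠ 0 := mul_ne_zero hx4 (pow_ne_zero _ hs4)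
  set v1 := x1*s1^k
  set v2 := x2*s2^k
  set v3 := x3*s3^k
  set v4 := x4*s4^k
  set A1 := qPoch (x1 ^ 2) (s1 ^ 2) k
  set A2 := qPoch (x2 ^ 2) (s2 ^ 2) k
  set A3 := qPoch (x3 ^ 2) (s3 ^ 2) k
  set A4 := qPoch (x4 ^ 2) (s4 ^ 2) k
  have hnum : A1*(1 - v1^2)*(A2*(1 - v2^2))*(A3*(1 - v3^2))*(A4*(1 - v4^2))
      = A1*A2*A3*A4*((1 - v1^2)*((1 - v2^2)*((1 - v3^2)*(1 - v4^2)))) := by ring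
  rw [hnum]
  exact frac4 _ _ _ _ _ _ _ _ _ _ _ d1 d2 d3 d4 f1 f2 f3 f4 (key4 v1 v2 v3 v4 u1 u2 u3 u4)
end
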